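/- arXiv:2003.08364 — 2 statements merged into one kernel-verified Lean document; each statement's English description precedes it below -/
import Mathlib

section
/- Let U_L > 0, U_H > 0, 0 ≤ α < 1, and β ≥ 0 be real numbers, and assume U_L·(1−α) < 1. Then (β·U_H + α·U_L) / (1 − U_L·(1−α)) ≤ (1 − U_H − α·U_L) / ((1−α)·U_L) holds if and only if (1−α)·(1−β) ≥ (U_H + U_L − 1) / (U_L · U_H). -/
/-- Algebraic content of the schedulability test (Theorem 1): the virtual-deadline
interval is nonempty iff `(1-α)(1-β) ≥ (U_H + U_L - 1)/(U_L · U_H)`. -/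
theorem sched_test_iff (U_L U_H α β : ℝ)
    (hL : 0 < U_L) (hH : 0 < U_H) (hα0 : 0 ≤ α) (hα1 : α < 1) (hβ : 0 ≤ β)
    (hden : U_L * (1 - α) < 1) :
    (β * U_H + α * U_L) / (1 - U_L * (1 - α)) ≤
      (1 - U_H - α * U_L) / ((1 - α) * U_L) ↔
    (1 - α) * (1 - β) ≥ (U_H + U_L - 1) / (U_L * U_H) := by
  have h1 : (0:ℝ) < 1 - U_L * (1 - α) := by linarith
  have h2 : (0:ℝ) < (1 - α) * U_L := mul_pos (by linarith) hL
  have h3 : (0:ℝ) < U_L * U_H := by positivity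
  rw [div_le_div_iff₀ h1 h2, ge_iff_le, div_le_iff₀ h3]
  constructor <;> intro h <;> nlinarith [h]
end

section
/- Let U_L > 0, U_H > 0, 0 < M < 1, and 0 < w ≤ 1 be real numbers. Define g : ℝ → ℝ by g(β) = U_H·w·β − U_L·(1−w)·M/(1−β), and define β★ = max{0, min{1−M, 1 − √(M·(1−w)·U_L/(w·U_H))}} (where for w = 1 the square-root term is 0, so β★ = 1−M). Then for every β ∈ [0, 1−M], g(β) ≤ g(β★); i.e., g attains its maximum over the interval [0, 1−M] at β★. -/
/-!
Writing `c = U_L·(1−w)·M = U_H·w·s²` with `s = √(c/(U_H·w))` and `t = 1 − β`, one has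
`g(β) = U_H·w·(1 − (t + s²/t))`. So maximizing `g` over `β ∈ [0, 1−M]` means minimizing
`t + s²/t` over `t ∈ [M, 1]`; this function decreases up to `t = s` and increases after it,
so its minimum on `[M, 1]` is at `s` clamped to `[M, 1]`, which is exactly `1 − β★`.
-/

open Set

lemma add_sq_div_clamp_le {m n s t : ℝ} (hm : 0 < m) (hs : 0 ≤ s) (ht : t ∈ Icc m n) :
    min n (max m s) + s ^ 2 / min n (max m s) ≤ t + s ^ 2 / t := by
  obtain ⟨hmt, htn⟩ := ht
  set p := min n (max m s) with hp_def
  have hp : 0 < p := lt_min (by linarith) (lt_max_of_lt_left hm)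
  have ht0 : 0 < t := by linarith
  have htp : 0 < t * p := mul_pos ht0 hp
  have hkey : 0 ≤ (t - p) * (t * p - s ^ 2) := by
    rcases le_total s m with hsm | hms
    · have : p = m := by rw [hp_def, max_eq_left hsm, min_eq_right (by linarith)]
      rw [this]
      exact mul_nonneg (by linarith) (by nlinarith)
    rcases le_total s n with hsn | hns
    · have : p = s := by rw [hp_def, max_eq_right hms, min_eq_right hsn]
      rw [this]
      nlinarith [sq_nonneg (t - s)]
    · have : p = n := by rw [hp_def, max_eq_right (by linarith), min_eq_left hns]
      rw [this]
      exact mul_nonneg_of_nonpos_of_nonpos (by linarith) (by nlinarith)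
  have hdiff : t + s ^ 2 / t - (p + s ^ 2 / p) = (t - p) * (t * p - s ^ 2) / (t * p) := by
    field_simp
    ring
  linarith [div_nonneg hkey htp.le]

lemma one_sub_max_zero_min (M s : ℝ) :
    1 - max 0 (min (1 - M) (1 - s)) = min 1 (max M s) := by
  rw [← min_sub_sub_left, sub_zero, ← max_sub_sub_left, sub_sub_cancel, sub_sub_cancel]

theorem total_util_maximizer_general (U_L U_H M w : ℝ)
    (hL : 0 < U_L) (hH : 0 < U_H) (hM0 : 0 < M)
    (hw0 : 0 < w) (hw1 : w ≤ 1)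
    (βs : ℝ)
    (hβs : βs = max 0 (min (1 - M) (1 - Real.sqrt (M * (1 - w) * U_L / (w * U_H))))) :
    ∀ β ∈ Set.Icc (0 : ℝ) (1 - M),
      U_H * w * β - U_L * (1 - w) * M / (1 - β) ≤
        U_H * w * βs - U_L * (1 - w) * M / (1 - βs) := by
  rintro β ⟨hβ0, hβ1⟩
  set s := Real.sqrt (M * (1 - w) * U_L / (w * U_H))
  have hw : 0 ≤ 1 - w := by linarith
  have hc : U_L * (1 - w) * M = U_H * w * s ^ 2 := by
    rw [Real.sq_sqrt (by positivity)]
    field_simp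
  have hβs' : 1 - βs = min 1 (max M s) := by rw [hβs, one_sub_max_zero_min]
  have hmin := add_sq_div_clamp_le (s := s) hM0 (Real.sqrt_nonneg _)
    (show 1 - β ∈ Icc M 1 from ⟨by linarith, by linarith⟩)
  calc U_H * w * β - U_L * (1 - w) * M / (1 - β)
      = U_H * w - U_H * w * ((1 - β) + s ^ 2 / (1 - β)) := by rw [hc]; ring
    _ ≤ U_H * w - U_H * w * ((1 - βs) + s ^ 2 / (1 - βs)) := by
      rw [hβs']
      gcongr
    _ = U_H * w * βs - U_L * (1 - w) * M / (1 - βs) := by rw [hc]; ring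

/-- Equation (8) of the paper: the function
`g(β) = U_H·w·β − U_L·(1−w)·M/(1−β)` attains its maximum over `[0, 1−M]` at
`β★ = max 0 (min (1−M) (1 − √(M·(1−w)·U_L/(w·U_H))))`. -/
theorem total_util_maximizer (U_L U_H M w : ℝ)
    (hL : 0 < U_L) (hH : 0 < U_H) (hM0 : 0 < M) (hM1 : M < 1)
    (hw0 : 0 < w) (hw1 : w ≤ 1)
    (βs : ℝ)
    (hβs : βs = max 0 (min (1 - M) (1 - Real.sqrt (M * (1 - w) * U_L / (w * U_H))))) :
    ∀ β ∈ Set.Icc (0 : ℝ) (1 - M),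
      U_H * w * β - U_L * (1 - w) * M / (1 - β) ≤
        U_H * w * βs - U_L * (1 - w) * M / (1 - βs) :=
  total_util_maximizer_general U_L U_H M w hL hH hM0 hw0 hw1 βs hβs
end
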